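/- In any execution of the quasi rendezvous protocol, after a process has executed its first three atomic actions, it never performs an incomplete reading or an incomplete writing: every subsequent read of a Write register occurs within a full reading and every subsequent write into a Write register occurs within a full writing. -/
import Mathlib


/-!
An operational model of the quasi rendezvous protocol of Johnen, Lavallée, Lavault.

Each process `A` owns, for each neighbour `B_i`, a register `Write_{AB_i}` and two
one-bit registers `Control_{AB_i}` and `CheckControl_{AB_i}`; communication is under
read/write atomicity.
-/

structure Network where
  Proc : Type
  deg : Proc → ℕ
  deg_pos : ∀ p, 0 < deg p
  nbr : (p : Proc) → Fin (deg p) → Proc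
  nbr_ne : ∀ p i, nbr p i ≠ p
  nbr_inj : ∀ p, Function.Injective (nbr p)
  nbr_symm : ∀ p i, ∃ j, nbr (nbr p i) j = p

namespace QR

open Classical

/-- Program counter of a process with `n` neighbours running the quasi rendezvous
protocol.  `wr i k` : writing phase, neighbour `i`, sub-action `k`
(`k = 0`: `write(Write_{AB_i}, get_i)`, `k = 1`: `c_i ← read(Control_{AB_i})`,
`k = 2`: `write(Control_{AB_i}, (c_i+1) mod 2)`);
`lp i k` : repeat loop, neighbour `i`, sub-action `k`
(`k = 0`: `b_i ← read(Control_{B_iA})`, `k = 1`: `d_i ← read(CheckControl_{AB_i})`,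
then if `b_i ≠ d_i` continue with `k = 2`: `r_i ← read(Write_{B_iA})` and
`k = 3`: `write(CheckControl_{AB_i}, b_i)`, else jump to `k = 4`;
`k = 4`: `c_i ← read(Control_{AB_i})`, `k = 5`: `l_i ← read(CheckControl_{B_iA})`,
followed, after the last neighbour, by the (local) exit test `∀ i, c_i = l_i`). -/
inductive PC (n : ℕ) : Type
  | wr : Fin n → Fin 3 → PC n
  | lp : Fin n → Fin 6 → PC n

/-- An atomic action (read/write atomicity); `A B` names the owner and the direction
of the register, e.g. `readC A B` is a read of `Control_{AB}` and `writeCC A B b`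
writes the bit `b` into `CheckControl_{AB}`. -/
inductive Act (Proc Val : Type) : Type
  | readW : Proc → Proc → Act Proc Val
  | writeW : Proc → Proc → Val → Act Proc Val
  | readC : Proc → Proc → Act Proc Val
  | writeC : Proc → Proc → Bool → Act Proc Val
  | readCC : Proc → Proc → Act Proc Val
  | writeCC : Proc → Proc → Bool → Act Proc Val

/-- A configuration: register contents and local states (pc and local variables
`r_i`, `b_i`, `d_i`, `c_i`, `l_i`). -/
structure Config (Net : Network) (Val : Type) : Type where
  regW : Net.Proc → Net.Proc → Val
  regC : Net.Proc → Net.Proc → Bool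
  regCC : Net.Proc → Net.Proc → Bool
  pc : (p : Net.Proc) → PC (Net.deg p)
  rv : (p : Net.Proc) → Fin (Net.deg p) → Val
  bv : (p : Net.Proc) → Fin (Net.deg p) → Bool
  dv : (p : Net.Proc) → Fin (Net.deg p) → Bool
  cv : (p : Net.Proc) → Fin (Net.deg p) → Bool
  lv : (p : Net.Proc) → Fin (Net.deg p) → Bool

def finSucc? {n : ℕ} (i : Fin n) : Option (Fin n) :=
  if h : i.1 + 1 < n then some ⟨i.1 + 1, h⟩ else none

noncomputable def upd2 {Proc : Type} {β : Type} (f : Proc → Proc → β) (a b : Proc) (v : β) :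
    Proc → Proc → β :=
  fun x y => if x = a ∧ y = b then v else f x y

/-- One atomic step of process `p`, labelled by the action performed.  The value
written by `write(Write_{AB_i}, get_i)` is arbitrary (`get_i` is an arbitrary helper
function returning the next message). -/
inductive Step (Net : Network) (Val : Type) :
    Config Net Val → Net.Proc → Act Net.Proc Val → Config Net Val → Prop
  | writeW (c : Config Net Val) (p : Net.Proc) (i : Fin (Net.deg p)) (v : Val)
      (h : c.pc p = .wr i 0) :
      Step Net Val c p (.writeW p (Net.nbr p i) v)
        { c with
          regW := upd2 c.regW p (Net.nbr p i) v
          pc := Function.update c.pc p (PC.wr i 1) }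
  | readOwnC (c : Config Net Val) (p : Net.Proc) (i : Fin (Net.deg p))
      (h : c.pc p = .wr i 1) :
      Step Net Val c p (.readC p (Net.nbr p i))
        { c with
          cv := Function.update c.cv p (Function.update (c.cv p) i (c.regC p (Net.nbr p i)))
          pc := Function.update c.pc p (PC.wr i 2) }
  | writeOwnC (c : Config Net Val) (p : Net.Proc) (i : Fin (Net.deg p))
      (h : c.pc p = .wr i 2) :
      Step Net Val c p (.writeC p (Net.nbr p i) (!(c.cv p i)))
        { c with
          regC := upd2 c.regC p (Net.nbr p i) (!(c.cv p i))
          pc := Function.update c.pc p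
            (match finSucc? i with
             | some j => PC.wr j 0
             | none => PC.lp ⟨0, Net.deg_pos p⟩ 0) }
  | readNbrC (c : Config Net Val) (p : Net.Proc) (i : Fin (Net.deg p))
      (h : c.pc p = .lp i 0) :
      Step Net Val c p (.readC (Net.nbr p i) p)
        { c with
          bv := Function.update c.bv p (Function.update (c.bv p) i (c.regC (Net.nbr p i) p))
          pc := Function.update c.pc p (PC.lp i 1) }
  | readOwnCC (c : Config Net Val) (p : Net.Proc) (i : Fin (Net.deg p))
      (h : c.pc p = .lp i 1) :
      Step Net Val c p (.readCC p (Net.nbr p i))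
        { c with
          dv := Function.update c.dv p
            (Function.update (c.dv p) i (c.regCC p (Net.nbr p i)))
          pc := Function.update c.pc p
            (if c.bv p i ≠ c.regCC p (Net.nbr p i) then PC.lp i 2 else PC.lp i 4) }
  | readNbrW (c : Config Net Val) (p : Net.Proc) (i : Fin (Net.deg p))
      (h : c.pc p = .lp i 2) :
      Step Net Val c p (.readW (Net.nbr p i) p)
        { c with
          rv := Function.update c.rv p (Function.update (c.rv p) i (c.regW (Net.nbr p i) p))
          pc := Function.update c.pc p (PC.lp i 3) }
  | writeOwnCC (c : Config Net Val) (p : Net.Proc) (i : Fin (Net.deg p))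
      (h : c.pc p = .lp i 3) :
      Step Net Val c p (.writeCC p (Net.nbr p i) (c.bv p i))
        { c with
          regCC := upd2 c.regCC p (Net.nbr p i) (c.bv p i)
          pc := Function.update c.pc p (PC.lp i 4) }
  | readOwnC' (c : Config Net Val) (p : Net.Proc) (i : Fin (Net.deg p))
      (h : c.pc p = .lp i 4) :
      Step Net Val c p (.readC p (Net.nbr p i))
        { c with
          cv := Function.update c.cv p (Function.update (c.cv p) i (c.regC p (Net.nbr p i)))
          pc := Function.update c.pc p (PC.lp i 5) }
  | readNbrCC (c : Config Net Val) (p : Net.Proc) (i : Fin (Net.deg p))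
      (h : c.pc p = .lp i 5) :
      Step Net Val c p (.readCC (Net.nbr p i) p)
        { c with
          lv := Function.update c.lv p (Function.update (c.lv p) i (c.regCC (Net.nbr p i) p))
          pc := Function.update c.pc p
            (match finSucc? i with
             | some j => PC.lp j 0
             | none =>
               if ∀ j, c.cv p j = Function.update (c.lv p) i (c.regCC (Net.nbr p i) p) j
               then PC.wr ⟨0, Net.deg_pos p⟩ 0
               else PC.lp ⟨0, Net.deg_pos p⟩ 0) }

/-- An execution: an infinite sequence of configurations, starting from an arbitrary
configuration, where at instant `t` the scheduled process performs one atomic action. -/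
structure Exec (Net : Network) (Val : Type) : Type where
  cfg : ℕ → Config Net Val
  sched : ℕ → Net.Proc
  act : ℕ → Act Net.Proc Val
  step : ∀ t, Step Net Val (cfg t) (sched t) (act t) (cfg (t + 1))

def Enabled {Net : Network} {Val : Type} (c : Config Net Val) (p : Net.Proc) : Prop :=
  ∃ a c', Step Net Val c p a c'

/-- Fair scheduler: any process that can continuously perform an action eventually
performs one. -/
def Exec.Fair {Net : Network} {Val : Type} (e : Exec Net Val) : Prop :=
  ∀ p t, (∀ u, t ≤ u → Enabled (e.cfg u) p) → ∃ u, t ≤ u ∧ e.sched u = p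

/-- The program counter of `p` is inside the repeat loop. -/
def InLoop {Net : Network} {Val : Type} (c : Config Net Val) (p : Net.Proc) : Prop :=
  ∃ i k, c.pc p = PC.lp i k

/-- In the quasi rendezvous protocol, `B` allows `A` to write iff
`CheckControl_{BA} = Control_{AB}`. -/
def Allows {Net : Network} {Val : Type} (c : Config Net Val) (B A : Net.Proc) : Prop :=
  c.regCC B A = c.regC A B

/-- `B` is a neighbour of `A`. -/
def Neighbour (Net : Network) (A B : Net.Proc) : Prop := ∃ i, Net.nbr A i = B

/-- At instant `t`, process `A` writes (some value) into its register `Write_{AB}`. -/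
def WritesW {Net : Network} {Val : Type} (e : Exec Net Val) (A B : Net.Proc) (t : ℕ) : Prop :=
  e.sched t = A ∧ ∃ v, e.act t = Act.writeW A B v

/-- At instant `t`, process `B` reads from the register `Write_{AB}` of its neighbour `A`. -/
def ReadsW {Net : Network} {Val : Type} (e : Exec Net Val) (A B : Net.Proc) (t : ℕ) : Prop :=
  e.sched t = B ∧ e.act t = Act.readW A B

/-- Process `P` has executed (at least) its first three atomic actions before
instant `t`. -/
def DidThree {Net : Network} {Val : Type} (e : Exec Net Val) (P : Net.Proc) (t : ℕ) : Prop :=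
  ∃ u1 u2 u3, u1 < u2 ∧ u2 < u3 ∧ u3 < t ∧
    e.sched u1 = P ∧ e.sched u2 = P ∧ e.sched u3 = P

/-- `A` performs a full (complete) writing of `Write_{AB}` at instants
`t1 < t2 < t3` (with no other action of `A` in between): the sequence
`write(Write_{AB}, get)`; `c ← read(Control_{AB})`;
`write(Control_{AB}, (c+1) mod 2)`. -/
def FullWriting {Net : Network} {Val : Type} (e : Exec Net Val) (A B : Net.Proc)
    (t1 t2 t3 : ℕ) : Prop :=
  t1 < t2 ∧ t2 < t3 ∧
  e.sched t1 = A ∧ e.sched t2 = A ∧ e.sched t3 = A ∧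
  (∃ v, e.act t1 = Act.writeW A B v) ∧
  e.act t2 = Act.readC A B ∧
  e.act t3 = Act.writeC A B (!(e.cfg t2).regC A B) ∧
  (∀ u, t1 < u → u < t3 → u ≠ t2 → e.sched u ≠ A)

end QR

namespace QR

/-- The read by `B` of the register `Write_{AB}` at instant `t` occurs within a
full reading of `Write_{AB}`, i.e. within the four-action sequence
`b ← read(Control_{AB})`; `d ← read(CheckControl_{BA})`; `if b ≠ d then
{ r ← read(Write_{AB}); write(CheckControl_{BA}, b) }` performed consecutively
(among the actions of `B`). -/
def WithinFullReading {Net : Network} {Val : Type} (e : Exec Net Val) (A B : Net.Proc)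
    (t : ℕ) : Prop :=
  ∃ t1 t2 t4, t1 < t2 ∧ t2 < t ∧ t < t4 ∧
    e.sched t1 = B ∧ e.sched t2 = B ∧ e.sched t4 = B ∧
    e.act t1 = Act.readC A B ∧
    e.act t2 = Act.readCC B A ∧
    e.act t4 = Act.writeCC B A ((e.cfg t1).regC A B) ∧
    (e.cfg t1).regC A B ≠ (e.cfg t2).regCC B A ∧
    (∀ u, t1 < u → u < t4 → u ≠ t2 → u ≠ t → e.sched u ≠ B)

/-- The write by `A` into the register `Write_{AB}` at instant `t` occurs within a
full writing of `Write_{AB}`, i.e. within the three-action sequence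
`write(Write_{AB}, get)`; `c ← read(Control_{AB})`;
`write(Control_{AB}, (c+1) mod 2)` performed consecutively
(among the actions of `A`). -/
def WithinFullWriting {Net : Network} {Val : Type} (e : Exec Net Val) (A B : Net.Proc)
    (t : ℕ) : Prop :=
  ∃ t2 t3, FullWriting e A B t t2 t3

end QR

namespace QR
variable {Net : Network} {Val : Type}

lemma frame {c c' : Config Net Val} {q : Net.Proc} {a : Act Net.Proc Val}
    (h : Step Net Val c q a c') {p : Net.Proc} (hp : p ≠ q) :
    c'.pc p = c.pc p ∧ c'.bv p = c.bv p ∧ c'.cv p = c.cv p := by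
  classical
  cases h <;> simp_all [Function.update_of_ne]

lemma always_enabled (c : Config Net Val) (p : Net.Proc) : Enabled c p := by
  rcases h : c.pc p with ⟨i, k⟩ | ⟨i, k⟩
  · fin_cases k
    · exact ⟨_, _, .writeW c p i (c.regW p p) h⟩
    · exact ⟨_, _, .readOwnC c p i h⟩
    · exact ⟨_, _, .writeOwnC c p i h⟩
  · fin_cases k
    · exact ⟨_, _, .readNbrC c p i h⟩
    · exact ⟨_, _, .readOwnCC c p i h⟩
    · exact ⟨_, _, .readNbrW c p i h⟩
    · exact ⟨_, _, .writeOwnCC c p i h⟩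
    · exact ⟨_, _, .readOwnC' c p i h⟩
    · exact ⟨_, _, .readNbrCC c p i h⟩

end QR
namespace QR
variable {Net : Network} {Val : Type}

lemma exists_last {P : ℕ → Prop} {t : ℕ} (h : ∃ u, u < t ∧ P u) :
    ∃ u, u < t ∧ P u ∧ ∀ v, u < v → v < t → ¬ P v := by
  induction t with
  | zero => obtain ⟨u, hu, _⟩ := h; omega
  | succ n ih =>
    by_cases hn : P n
    · exact ⟨n, Nat.lt_succ_self n, hn, fun v hv1 hv2 => by omega⟩
    · obtain ⟨u, hu, hPu⟩ := h
      have hun : u < n := by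
        rcases Nat.lt_succ_iff_lt_or_eq.mp hu with h' | rfl
        · exact h'
        · exact absurd hPu hn
      obtain ⟨w, hw, hPw, hmax⟩ := ih ⟨u, hun, hPu⟩
      refine ⟨w, Nat.lt_succ_of_lt hw, hPw, fun v hv1 hv2 => ?_⟩
      rcases Nat.lt_succ_iff_lt_or_eq.mp hv2 with h' | rfl
      · exact hmax v hv1 h'
      · exact hn

lemma exists_first {P : ℕ → Prop} {s : ℕ} (h : ∃ u, s ≤ u ∧ P u) :
    ∃ u, s ≤ u ∧ P u ∧ ∀ v, s ≤ v → v < u → ¬ P v := by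
  classical
  exact ⟨Nat.find h, (Nat.find_spec h).1, (Nat.find_spec h).2,
    fun v hv1 hv2 hPv => Nat.find_min h hv2 ⟨hv1, hPv⟩⟩

lemma const_of_no_sched (e : Exec Net Val) (p : Net.Proc) {s u : ℕ} (hsu : s ≤ u)
    (h : ∀ v, s ≤ v → v < u → e.sched v ≠ p) :
    (e.cfg u).pc p = (e.cfg s).pc p ∧ (e.cfg u).bv p = (e.cfg s).bv p ∧
      (e.cfg u).cv p = (e.cfg s).cv p := by
  induction u, hsu using Nat.le_induction with
  | base => exact ⟨rfl, rfl, rfl⟩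
  | succ n hn ih =>
    have hne : p ≠ e.sched n := fun he => h n hn (Nat.lt_succ_self n) he.symm
    have hf := frame (e.step n) hne
    have ih' := ih (fun v hv1 hv2 => h v hv1 (by omega))
    exact ⟨hf.1.trans ih'.1, hf.2.1.trans ih'.2.1, hf.2.2.trans ih'.2.2⟩

end QR
namespace QR
variable {Net : Network} {Val : Type}

lemma inv_to_lp2 {c c' : Config Net Val} {p : Net.Proc} {a : Act Net.Proc Val}
    {i : Fin (Net.deg p)} (h : Step Net Val c p a c') (hpc : c'.pc p = PC.lp i 2) :
    a = Act.readCC p (Net.nbr p i) ∧ c.pc p = PC.lp i 1 ∧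
      c.bv p i ≠ c.regCC p (Net.nbr p i) ∧ c'.bv p = c.bv p := by
  classical
  cases h <;> simp_all [Function.update_self] <;>
    (try split at hpc) <;> (try split at hpc) <;> simp_all

end QR
namespace QR
variable {Net : Network} {Val : Type}

lemma inv_to_lp1 {c c' : Config Net Val} {p : Net.Proc} {a : Act Net.Proc Val}
    {i : Fin (Net.deg p)} (h : Step Net Val c p a c') (hpc : c'.pc p = PC.lp i 1) :
    a = Act.readC (Net.nbr p i) p ∧ c'.bv p i = c.regC (Net.nbr p i) p := by
  classical
  cases h <;> simp_all [Function.update_self] <;>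
    (try split at hpc) <;> (try split at hpc) <;> simp_all

lemma inv_from_lp3 {c c' : Config Net Val} {p : Net.Proc} {a : Act Net.Proc Val}
    {i : Fin (Net.deg p)} (h : Step Net Val c p a c') (hpc : c.pc p = PC.lp i 3) :
    a = Act.writeCC p (Net.nbr p i) (c.bv p i) := by
  classical
  cases h <;> simp_all

lemma inv_readW {c c' : Config Net Val} {p A : Net.Proc} {a : Act Net.Proc Val}
    (h : Step Net Val c p a c') (ha : a = Act.readW A p) :
    ∃ i, Net.nbr p i = A ∧ c.pc p = PC.lp i 2 ∧ c'.pc p = PC.lp i 3 ∧ c'.bv p = c.bv p := by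
  classical
  cases h <;> simp_all [Function.update_self]

lemma inv_writeW {c c' : Config Net Val} {p B : Net.Proc} {v : Val} {a : Act Net.Proc Val}
    (h : Step Net Val c p a c') (ha : a = Act.writeW p B v) :
    ∃ i, Net.nbr p i = B ∧ c'.pc p = PC.wr i 1 := by
  classical
  cases h <;> simp_all [Function.update_self]

lemma inv_from_wr1 {c c' : Config Net Val} {p : Net.Proc} {a : Act Net.Proc Val}
    {i : Fin (Net.deg p)} (h : Step Net Val c p a c') (hpc : c.pc p = PC.wr i 1) :
    a = Act.readC p (Net.nbr p i) ∧ c'.pc p = PC.wr i 2 ∧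
      c'.cv p i = c.regC p (Net.nbr p i) := by
  classical
  cases h <;> simp_all [Function.update_self]

lemma inv_from_wr2 {c c' : Config Net Val} {p : Net.Proc} {a : Act Net.Proc Val}
    {i : Fin (Net.deg p)} (h : Step Net Val c p a c') (hpc : c.pc p = PC.wr i 2) :
    a = Act.writeC p (Net.nbr p i) (!(c.cv p i)) := by
  classical
  cases h <;> simp_all

end QR
open QR in
/-- In any (fair) execution of the quasi rendezvous protocol,
after a process has executed its first three atomic actions, it never performs an
incomplete reading or an incomplete writing: every subsequent read of a `Write`
register occurs within a full reading, and every subsequent write into a `Write`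
register occurs within a full writing. -/
theorem quasi_rendezvous_no_incomplete_read_or_write (Net : Network) (Val : Type)
    (e : Exec Net Val) (hfair : e.Fair) :
    (∀ A B : Net.Proc, ∀ t : ℕ, Neighbour Net A B → DidThree e B t →
      ReadsW e A B t → WithinFullReading e A B t) ∧
    (∀ A B : Net.Proc, ∀ t : ℕ, Neighbour Net A B → DidThree e A t →
      WritesW e A B t → WithinFullWriting e A B t) := by
  constructor
  · -- reading part
    intro A B t hnbr hthree hreads
    obtain ⟨hschedt, hactt⟩ := hreads
    have hstept := e.step t; rw [hschedt] at hstept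
    obtain ⟨i, hA, hpct, hpct1, hbvt⟩ := inv_readW hstept hactt
    obtain ⟨u1, u2, u3, h12, h23, h3t, hs1, hs2, hs3⟩ := hthree
    -- t2 : last B-step before t
    obtain ⟨t2, ht2t, hst2, ht2max⟩ :=
      exists_last (P := fun u => e.sched u = B) ⟨u3, h3t, hs3⟩
    have hc2 := const_of_no_sched e B (show t2 + 1 ≤ t by omega)
      (fun v hv1 hv2 => ht2max v (by omega) hv2)
    have hpct21 : (e.cfg (t2 + 1)).pc B = PC.lp i 2 := by rw [← hc2.1]; exact hpct
    have hstept2 := e.step t2; rw [hst2] at hstept2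
    obtain ⟨hact2, hpc2, hneq, hbv2⟩ := inv_to_lp2 hstept2 hpct21
    -- t1 : last B-step before t2
    have hu3t2 : u3 ≤ t2 := by
      by_contra hlt
      exact ht2max u3 (by omega) h3t hs3
    obtain ⟨t1, ht1t2, hst1, ht1max⟩ :=
      exists_last (P := fun u => e.sched u = B) (t := t2) ⟨u2, by omega, hs2⟩
    have hc1 := const_of_no_sched e B (show t1 + 1 ≤ t2 by omega)
      (fun v hv1 hv2 => ht1max v (by omega) hv2)
    have hpct11 : (e.cfg (t1 + 1)).pc B = PC.lp i 1 := by rw [← hc1.1]; exact hpc2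
    have hstept1 := e.step t1; rw [hst1] at hstept1
    obtain ⟨hact1, hbv1⟩ := inv_to_lp1 hstept1 hpct11
    have hbvchain : (e.cfg t2).bv B i = (e.cfg t1).regC A B := by
      have := congrFun hc1.2.1 i
      rw [this, hbv1, hA]
    -- t4 : first B-step after t
    obtain ⟨t4, ht4, hst4, ht4min⟩ :=
      exists_first (hfair B (t + 1) (fun u _ => always_enabled _ B))
    have hc4 := const_of_no_sched e B ht4 ht4min
    have hpct4 : (e.cfg t4).pc B = PC.lp i 3 := by rw [hc4.1]; exact hpct1
    have hstept4 := e.step t4; rw [hst4] at hstept4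
    have hact4 := inv_from_lp3 hstept4 hpct4
    have hbv4 : (e.cfg t4).bv B i = (e.cfg t1).regC A B := by
      rw [congrFun hc4.2.1 i, congrFun hbvt i, congrFun hc2.2.1 i, congrFun hbv2 i,
        hbvchain]
    refine ⟨t1, t2, t4, by omega, ht2t, by omega, hst1, hst2, hst4, ?_, ?_, ?_, ?_, ?_⟩
    · rw [hact1, hA]
    · rw [hact2, hA]
    · rw [hact4, hA, hbv4]
    · rw [← hbvchain]
      rw [hA] at hneq
      exact hneq
    · intro u hu1 hu4 hune2 hunet hsB
      have hcase : u < t2 ∨ (t2 < u ∧ u < t) ∨ (t < u ∧ u < t4) := by omega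
      rcases hcase with h | ⟨h1, h2⟩ | ⟨h1, h2⟩
      · exact ht1max u hu1 h hsB
      · exact ht2max u h1 h2 hsB
      · exact ht4min u (by omega) h2 hsB
  · -- writing part
    intro A B t hnbr hthree hwrites
    obtain ⟨hschedt, v, hactt⟩ := hwrites
    have hstept := e.step t; rw [hschedt] at hstept
    obtain ⟨i, hB, hpct1⟩ := inv_writeW hstept hactt
    obtain ⟨t2, ht2ge, hst2, ht2min⟩ :=
      exists_first (hfair A (t + 1) (fun u _ => always_enabled _ A))
    have hc2 := const_of_no_sched e A ht2ge ht2min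
    have hpct2 : (e.cfg t2).pc A = PC.wr i 1 := by rw [hc2.1]; exact hpct1
    have hstept2 := e.step t2; rw [hst2] at hstept2
    obtain ⟨hact2, hpc22, hcv2⟩ := inv_from_wr1 hstept2 hpct2
    obtain ⟨t3, ht3ge, hst3, ht3min⟩ :=
      exists_first (hfair A (t2 + 1) (fun u _ => always_enabled _ A))
    have hc3 := const_of_no_sched e A ht3ge ht3min
    have hpct3 : (e.cfg t3).pc A = PC.wr i 2 := by rw [hc3.1]; exact hpc22
    have hstept3 := e.step t3; rw [hst3] at hstept3
    have hact3 := inv_from_wr2 hstept3 hpct3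
    have hcv3 : (e.cfg t3).cv A i = (e.cfg t2).regC A B := by
      rw [congrFun hc3.2.2 i, hcv2, hB]
    refine ⟨t2, t3, by omega, by omega, hschedt, hst2, hst3, ⟨v, hactt⟩, ?_, ?_, ?_⟩
    · rw [hact2, hB]
    · rw [hact3, hcv3, hB]
    · intro u hu1 hu3 hune2 hsA
      have hcase : u < t2 ∨ (t2 < u ∧ u < t3) := by omega
      rcases hcase with h | ⟨h1, h2⟩
      · exact ht2min u (by omega) h hsA
      · exact ht3min u (by omega) h2 hsA
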